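/- In the N = 2 case, the size and κ of the combined partition μ(λ^{(1)}, λ^{(2)}; p) (built from charges (p, -p)) are: |μ| = 2(|λ^{(1)}| + |λ^{(2)}|) + p(2p - 1), and κ(μ) = 4(κ(λ^{(1)}) + κ(λ^{(2)})) + 2(4p - 1)(|λ^{(1)}| - |λ^{(2)}|). -/

import Mathlib

/-- The Maya diagram of a partition: the set `{μ_i - i + 1/2 : i ≥ 1} ⊆ ℤ + 1/2`,
realized inside `ℚ` (with the 0-indexed row lengths, `x_i = μ.rowLen i - (i+1) + 1/2`). -/
def maya (μ : YoungDiagram) : Set ℚ :=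
  Set.range fun i : ℕ => (μ.rowLen i : ℚ) - i - 1 / 2

/-- The disjoint union `{2(x_i(λ¹) + p - 1/4) : i ≥ 1} ∪ {2(x_j(λ²) - p + 1/4) : j ≥ 1}`
(with `x_i(λ) = λ_i - i + 1/2`, rows 0-indexed), the Maya diagram of the combined
partition `μ(λ¹, λ²; p)` in the 2-component decomposition with charges `(p, -p)`. -/
def maya2 (l1 l2 : YoungDiagram) (p : ℤ) : Set ℚ :=
  (Set.range fun i : ℕ => 2 * ((l1.rowLen i : ℚ) - i - 1 / 2 + p - 1 / 4)) ∪
  (Set.range fun j : ℕ => 2 * ((l2.rowLen j : ℚ) - j - 1 / 2 - p + 1 / 4))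

/-- `κ(μ) = 2 ∑_{(i,j) ∈ μ} (j - i)`, summed over the boxes of the Young diagram. -/
def kappa (μ : YoungDiagram) : ℤ :=
  2 * ∑ c ∈ μ.cells, ((c.2 : ℤ) - (c.1 : ℤ))

/-! For a diagram `ν` with at most `n` rows, the first `n` Maya coordinates `x_i = ν_i - i - 1/2`
are exactly the points of the Maya diagram above `-n`, and their power sums are
`∑ x_i = |ν| - n²/2` and `∑ x_i² = κ(ν) + n(4n² - 1)/12`.
Cutting both sides of `maya μ = maya2 λ¹ λ² p` at `-2M` for `M` large keeps the first `2M`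
coordinates of `μ`, and the first `M + p` (resp. `M - p`) rescaled coordinates of `λ¹` (resp. `λ²`).
Comparing first and second power sums of the two sides gives `|μ|` and `κ(μ)`. -/

open Finset

namespace YoungDiagram

variable (ν : YoungDiagram) {n : ℕ}

theorem rowLen_eq_zero_of_colLen_le {i : ℕ} (h : ν.colLen 0 ≤ i) : ν.rowLen i = 0 := by
  by_contra hne
  have := mem_iff_lt_colLen.1 (mem_iff_lt_rowLen.2 (Nat.pos_of_ne_zero hne))
  omega

theorem sum_cells_eq_sum_range_rowLen (hn : ν.colLen 0 ≤ n) {β : Type*} [AddCommMonoid β]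
    (f : ℕ × ℕ → β) :
    ∑ c ∈ ν.cells, f c = ∑ i ∈ range n, ∑ j ∈ range (ν.rowLen i), f (i, j) := by
  refine sum_finset_product _ _ _ fun ⟨i, j⟩ => ?_
  simp only [mem_cells, mem_range, mem_iff_lt_rowLen]
  refine ⟨fun hj => ⟨?_, hj⟩, And.right⟩
  by_contra! hi
  rw [ν.rowLen_eq_zero_of_colLen_le (hn.trans hi)] at hj
  exact Nat.not_lt_zero _ hj

theorem card_eq_sum_rowLen (hn : ν.colLen 0 ≤ n) : ν.card = ∑ i ∈ range n, ν.rowLen i := by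
  rw [YoungDiagram.card, card_eq_sum_ones, ν.sum_cells_eq_sum_range_rowLen hn]
  simp

end YoungDiagram

theorem sum_range_id_cast (r : ℕ) : ∑ j ∈ range r, (j : ℚ) = r * (r - 1) / 2 := by
  induction r with
  | zero => simp
  | succ r ih => rw [sum_range_succ, ih]; push_cast; ring

theorem sum_range_add_half (n : ℕ) : ∑ i ∈ range n, ((i : ℚ) + 1 / 2) = n ^ 2 / 2 := by
  induction n with
  | zero => simp
  | succ n ih => rw [sum_range_succ, ih]; push_cast; ring

theorem sum_range_add_half_sq (n : ℕ) :
    ∑ i ∈ range n, ((i : ℚ) + 1 / 2) ^ 2 = (n : ℚ) * (4 * n ^ 2 - 1) / 12 := by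
  induction n with
  | zero => simp
  | succ n ih => rw [sum_range_succ, ih]; push_cast; ring

def mayaCoord (ν : YoungDiagram) (i : ℕ) : ℚ := ν.rowLen i - i - 1 / 2

section mayaCoord

variable (ν : YoungDiagram) {n : ℕ}

theorem kappa_eq_sum_rowLen (hn : ν.colLen 0 ≤ n) :
    (kappa ν : ℚ) = ∑ i ∈ range n, ((ν.rowLen i : ℚ) ^ 2 - ν.rowLen i - 2 * i * ν.rowLen i) := by
  rw [kappa, Int.cast_mul, Int.cast_sum, ν.sum_cells_eq_sum_range_rowLen hn, mul_sum]
  refine sum_congr rfl fun i _ => ?_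
  push_cast
  rw [sum_sub_distrib, sum_range_id_cast, sum_const, card_range, nsmul_eq_mul]
  ring

theorem mayaCoord_strictAnti : StrictAnti (mayaCoord ν) := by
  refine strictAnti_nat_of_succ_lt fun i => ?_
  have : (ν.rowLen (i + 1) : ℚ) ≤ ν.rowLen i := by exact_mod_cast ν.rowLen_anti i (i + 1) i.le_succ
  simp only [mayaCoord]
  push_cast
  linarith

theorem lt_mayaCoord_iff (hn : ν.colLen 0 ≤ n) {t : ℚ} (ht₁ : -n - 1 / 2 < t)
    (ht₂ : t < -n + 1 / 2) {i : ℕ} : t < mayaCoord ν i ↔ i < n := by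
  simp only [mayaCoord]
  constructor
  · intro h
    by_contra! hi
    have : (n : ℚ) ≤ i := by exact_mod_cast hi
    rw [ν.rowLen_eq_zero_of_colLen_le (hn.trans hi), Nat.cast_zero] at h
    linarith
  · intro hi
    have : (i : ℚ) + 1 ≤ n := by exact_mod_cast hi
    have : (0 : ℚ) ≤ ν.rowLen i := Nat.cast_nonneg _
    linarith

theorem sum_mayaCoord (hn : ν.colLen 0 ≤ n) :
    ∑ i ∈ range n, mayaCoord ν i = ν.card - n ^ 2 / 2 := by
  simp only [mayaCoord, sub_sub, sum_sub_distrib, sum_range_add_half, ν.card_eq_sum_rowLen hn,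
    Nat.cast_sum]

theorem sum_mayaCoord_sq (hn : ν.colLen 0 ≤ n) :
    ∑ i ∈ range n, mayaCoord ν i ^ 2 = kappa ν + n * (4 * n ^ 2 - 1) / 12 := by
  have (i : ℕ) : mayaCoord ν i ^ 2 =
      ((ν.rowLen i : ℚ) ^ 2 - ν.rowLen i - 2 * i * ν.rowLen i) + ((i : ℚ) + 1 / 2) ^ 2 := by
    simp only [mayaCoord]; ring
  simp only [this, sum_add_distrib, sum_range_add_half_sq, kappa_eq_sum_rowLen ν hn]

theorem sum_two_mul_mayaCoord_add (hn : ν.colLen 0 ≤ n) (c : ℚ) :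
    ∑ i ∈ range n, (2 * mayaCoord ν i + c) = 2 * ν.card - n ^ 2 + n * c := by
  rw [sum_add_distrib, ← mul_sum, sum_mayaCoord ν hn, sum_const, card_range, nsmul_eq_mul]
  ring

theorem sum_two_mul_mayaCoord_add_sq (hn : ν.colLen 0 ≤ n) (c : ℚ) :
    ∑ i ∈ range n, (2 * mayaCoord ν i + c) ^ 2 =
      4 * kappa ν + n * (4 * n ^ 2 - 1) / 3 + 4 * c * (ν.card - n ^ 2 / 2) + n * c ^ 2 := by
  have (i : ℕ) :
      (2 * mayaCoord ν i + c) ^ 2 = 4 * mayaCoord ν i ^ 2 + 4 * c * mayaCoord ν i + c ^ 2 := by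
    ring
  simp only [this, sum_add_distrib, ← mul_sum, sum_const, card_range, nsmul_eq_mul,
    sum_mayaCoord ν hn, sum_mayaCoord_sq ν hn]
  ring

end mayaCoord

theorem maya2_eq_union (l1 l2 : YoungDiagram) (p : ℤ) :
    maya2 l1 l2 p = Set.range (fun i => 2 * mayaCoord l1 i + (2 * p - 1 / 2)) ∪
      Set.range (fun j => 2 * mayaCoord l2 j + (1 / 2 - 2 * p)) := by
  simp only [maya2, mayaCoord]
  congr 2 <;> funext i <;> ring

/-- The beads of the two shifted diagrams lie in the disjoint classes `2ℤ - 3/2` and `2ℤ - 1/2`. -/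
theorem two_mul_mayaCoord_add_ne (l1 l2 : YoungDiagram) (p : ℤ) (i j : ℕ) :
    2 * mayaCoord l1 i + (2 * p - 1 / 2) ≠ 2 * mayaCoord l2 j + (1 / 2 - 2 * p) := by
  intro h
  have h' : (2 * ((l1.rowLen i : ℤ) - i + 2 * p - l2.rowLen j + j) : ℚ) = 1 := by
    simp only [mayaCoord] at h
    push_cast
    linarith
  have : 2 * ((l1.rowLen i : ℤ) - i + 2 * p - l2.rowLen j + j) = 1 := by exact_mod_cast h'
  omega

theorem preimage_Ioi_two_mul_mayaCoord_add (ν : YoungDiagram) {n : ℕ} (hn : ν.colLen 0 ≤ n)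
    {c t : ℚ} (h₁ : 2 * n - 1 < c - t) (h₂ : c - t < 2 * n + 1) :
    (fun i => 2 * mayaCoord ν i + c) ⁻¹' Set.Ioi t = Set.Iio n := by
  ext i
  rw [Set.mem_preimage, Set.mem_Ioi, Set.mem_Iio,
    ← lt_mayaCoord_iff ν hn (t := (t - c) / 2) (by linarith) (by linarith)]
  constructor <;> intro <;> linarith

theorem image_range_mayaCoord_eq_union {l1 l2 μ : YoungDiagram} {p : ℤ}
    (h : maya μ = maya2 l1 l2 p) {M a b : ℕ} (ha : (a : ℚ) = M + p) (hb : (b : ℚ) = M - p)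
    (hμ : μ.colLen 0 ≤ 2 * M) (h1 : l1.colLen 0 ≤ a) (h2 : l2.colLen 0 ≤ b) :
    (range (2 * M)).image (mayaCoord μ) =
      (range a).image (fun i => 2 * mayaCoord l1 i + (2 * p - 1 / 2)) ∪
        (range b).image (fun j => 2 * mayaCoord l2 j + (1 / 2 - 2 * p)) := by
  have hx : mayaCoord μ ⁻¹' Set.Ioi (-(2 * M)) = Set.Iio (2 * M) :=
    Set.ext fun _ => lt_mayaCoord_iff μ hμ (by push_cast; linarith) (by push_cast; linarith)
  have hy := preimage_Ioi_two_mul_mayaCoord_add l1 h1 (c := 2 * p - 1 / 2) (t := -(2 * M))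
    (by linarith) (by linarith)
  have hz := preimage_Ioi_two_mul_mayaCoord_add l2 h2 (c := 1 / 2 - 2 * p) (t := -(2 * M))
    (by linarith) (by linarith)
  apply coe_injective
  simp only [coe_union, coe_image, coe_range]
  rw [← hx, ← hy, ← hz, Set.image_preimage_eq_range_inter, Set.image_preimage_eq_range_inter,
    Set.image_preimage_eq_range_inter, ← Set.union_inter_distrib_right, ← maya2_eq_union, ← h]
  rfl

theorem sum_mayaCoord_eq_of_maya_eq {l1 l2 μ : YoungDiagram} {p : ℤ}
    (h : maya μ = maya2 l1 l2 p) {M a b : ℕ} (ha : (a : ℚ) = M + p) (hb : (b : ℚ) = M - p)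
    (hμ : μ.colLen 0 ≤ 2 * M) (h1 : l1.colLen 0 ≤ a) (h2 : l2.colLen 0 ≤ b) (f : ℚ → ℚ) :
    ∑ k ∈ range (2 * M), f (mayaCoord μ k) =
      ∑ i ∈ range a, f (2 * mayaCoord l1 i + (2 * p - 1 / 2)) +
        ∑ j ∈ range b, f (2 * mayaCoord l2 j + (1 / 2 - 2 * p)) := by
  have hdisj : Disjoint ((range a).image (fun i => 2 * mayaCoord l1 i + (2 * p - 1 / 2)))
      ((range b).image (fun j => 2 * mayaCoord l2 j + (1 / 2 - 2 * p))) := by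
    simp only [disjoint_left, mem_image, not_exists, not_and]
    rintro _ ⟨i, -, rfl⟩ j -
    exact (two_mul_mayaCoord_add_ne l1 l2 p i j).symm
  have inj (ν : YoungDiagram) (c : ℚ) : Function.Injective (fun i => 2 * mayaCoord ν i + c) :=
    fun i j hij => (mayaCoord_strictAnti ν).injective (by simpa using hij)
  rw [← sum_image (mayaCoord_strictAnti μ).injective.injOn,
    image_range_mayaCoord_eq_union h ha hb hμ h1 h2, sum_union hdisj,
    sum_image (inj l1 _).injOn, sum_image (inj l2 _).injOn]

/-- Size and `κ` of the combined partition `μ(λ¹, λ²; p)` in the `N = 2` decomposition: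
`|μ| = 2(|λ¹| + |λ²|) + p(2p - 1)` and
`κ(μ) = 4(κ(λ¹) + κ(λ²)) + 2(4p - 1)(|λ¹| - |λ²|)`. -/
theorem su2_size_kappa (l1 l2 : YoungDiagram) (p : ℤ) (μ : YoungDiagram)
    (h : maya μ = maya2 l1 l2 p) :
    (μ.card : ℤ) = 2 * ((l1.card : ℤ) + l2.card) + p * (2 * p - 1) ∧
    kappa μ = 4 * (kappa l1 + kappa l2) + 2 * (4 * p - 1) * ((l1.card : ℤ) - l2.card) := by
  obtain ⟨M, hM⟩ : ∃ M : ℕ, M = l1.colLen 0 + l2.colLen 0 + μ.colLen 0 + p.natAbs := ⟨_, rfl⟩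
  obtain ⟨a, ha⟩ : ∃ a : ℕ, (a : ℤ) = M + p := ⟨(M + p).toNat, by omega⟩
  obtain ⟨b, hb⟩ : ∃ b : ℕ, (b : ℤ) = M - p := ⟨(M - p).toNat, by omega⟩
  have hμ : μ.colLen 0 ≤ 2 * M := by omega
  have h1 : l1.colLen 0 ≤ a := by omega
  have h2 : l2.colLen 0 ≤ b := by omega
  have haQ : (a : ℚ) = M + p := by exact_mod_cast ha
  have hbQ : (b : ℚ) = M - p := by exact_mod_cast hb
  have hsum := sum_mayaCoord_eq_of_maya_eq h haQ hbQ hμ h1 h2 fun x => x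
  have hsq := sum_mayaCoord_eq_of_maya_eq h haQ hbQ hμ h1 h2 (· ^ 2)
  rw [sum_mayaCoord μ hμ, sum_two_mul_mayaCoord_add l1 h1, sum_two_mul_mayaCoord_add l2 h2] at hsum
  rw [sum_mayaCoord_sq μ hμ, sum_two_mul_mayaCoord_add_sq l1 h1,
    sum_two_mul_mayaCoord_add_sq l2 h2] at hsq
  rw [haQ, hbQ] at hsum hsq
  push_cast at hsum hsq
  constructor
  · exact_mod_cast (by linear_combination hsum :
      (μ.card : ℚ) = 2 * ((l1.card : ℚ) + l2.card) + p * (2 * p - 1))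
  · exact_mod_cast (by linear_combination hsq :
      (kappa μ : ℚ) =
        4 * ((kappa l1 : ℚ) + kappa l2) + 2 * (4 * p - 1) * ((l1.card : ℚ) - l2.card))
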